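/- Let μ : R → K be a K-valued measure on a covering ring R on a set X. For any two finite partitions α and β of X relative to R, the measure entropy is subadditive: H_μ(α∨β) ≤ H_μ(α) + H_μ(β). -/

import Mathlib

open scoped Classical

/-- A covering ring of subsets of `X`: it covers `X` and is closed under
intersections, unions and differences. -/
def IsCoveringRing {X : Type*} (R : Set (Set X)) : Prop :=
  (∀ x : X, ∃ A ∈ R, x ∈ A) ∧
    ∀ A ∈ R, ∀ B ∈ R, A ∩ B ∈ R ∧ A ∪ B ∈ R ∧ A \ B ∈ R

/-- `R` is separating: distinct points can be separated by a member of `R`. -/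
def Separating {X : Type*} (R : Set (Set X)) : Prop :=
  ∀ x y : X, x ≠ y → ∃ A ∈ R, x ∈ A ∧ y ∉ A

/-- A shrinking collection: the intersection of any two members contains a member. -/
def Shrinking {X : Type*} (𝒜 : Set (Set X)) : Prop :=
  ∀ A ∈ 𝒜, ∀ B ∈ 𝒜, ∃ C ∈ 𝒜, C ⊆ A ∩ B

/-- A `K`-valued measure on a covering ring `R`: additive, bounded and continuous. -/
structure IsKMeasure {X : Type*} {K : Type*} [NormedField K]
    (R : Set (Set X)) (μ : Set X → K) : Prop where
  additive : ∀ A ∈ R, ∀ B ∈ R, Disjoint A B → μ (A ∪ B) = μ A + μ B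
  bounded : ∀ A ∈ R, ∃ M : ℝ, ∀ B ∈ R, B ⊆ A → ‖μ B‖ ≤ M
  cont : ∀ 𝒜 ⊆ R, Shrinking 𝒜 → ⋂₀ 𝒜 = ∅ →
    ∀ ε : ℝ, 0 < ε → ∃ A₀ ∈ 𝒜, ∀ A ∈ 𝒜, A ⊆ A₀ → ‖μ A‖ < ε

/-- `‖A‖_μ = sup {|μ B| : B ∈ R, B ⊆ A}`. -/
noncomputable def setNorm {X K : Type*} [NormedField K]
    (R : Set (Set X)) (μ : Set X → K) (A : Set X) : ℝ :=
  sSup {r : ℝ | ∃ B ∈ R, B ⊆ A ∧ r = ‖μ B‖}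

/-- `N_μ(x) = inf {‖A‖_μ : A ∈ R, x ∈ A}`. -/
noncomputable def normFun {X K : Type*} [NormedField K]
    (R : Set (Set X)) (μ : Set X → K) (x : X) : ℝ :=
  sInf {r : ℝ | ∃ A ∈ R, x ∈ A ∧ r = setNorm R μ A}

/-- `‖f‖_μ = sup_{x ∈ X} |f x| ⬝ N_μ(x)`. -/
noncomputable def fNorm {X K : Type*} [NormedField K]
    (R : Set (Set X)) (μ : Set X → K) (f : X → K) : ℝ :=
  sSup {r : ℝ | ∃ x : X, r = ‖f x‖ * normFun R μ x}

/-- A probability space: `R` is a covering algebra and `μ(X) = 1`. -/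
def IsProbSpace {X K : Type*} [NormedField K] (R : Set (Set X)) (μ : Set X → K) : Prop :=
  IsCoveringRing R ∧ Set.univ ∈ R ∧ IsKMeasure R μ ∧ μ Set.univ = 1

/-- A measure algebra isomorphism `(R,μ) → (R',ν)`. -/
def IsMeasAlgIso {X Y K : Type*} [NormedField K] (R : Set (Set X)) (μ : Set X → K)
    (R' : Set (Set Y)) (ν : Set Y → K) (Φ : Set X → Set Y) : Prop :=
  Set.BijOn Φ R R' ∧
    (∀ A ∈ R, ∀ B ∈ R, Φ (A ∪ B) = Φ A ∪ Φ B) ∧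
    (∀ A ∈ R, Φ (Set.univ \ A) = Set.univ \ Φ A) ∧
    (∀ A ∈ R, ν (Φ A) = μ A)

/-- An invertible measure preserving transformation of `(X,R,μ)`. -/
def IsInvMPT {X K : Type*} [NormedField K] (R : Set (Set X)) (μ : Set X → K)
    (T : X → X) : Prop :=
  Function.Bijective T ∧
    (∀ A ∈ R, T '' A ∈ R) ∧ (∀ A ∈ R, T ⁻¹' A ∈ R) ∧
    (∀ A ∈ R, μ (T '' A) = μ A) ∧ (∀ A ∈ R, μ (T ⁻¹' A) = μ A)

/-- A finite partition of `X` by pairwise disjoint nonempty members of `R`. -/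
def IsFinPartition {X : Type*} (R : Set (Set X)) (α : Finset (Set X)) : Prop :=
  (∀ A ∈ α, A ∈ R) ∧ (∀ A ∈ α, A ≠ ∅) ∧
    (∀ A ∈ α, ∀ B ∈ α, A ≠ B → Disjoint A B) ∧
    ⋃₀ (α : Set (Set X)) = Set.univ

/-- The join `α ∨ β` of two partitions, discarding empty intersections. -/
noncomputable def pJoin {X : Type*} (α β : Finset (Set X)) : Finset (Set X) :=
  (Finset.image₂ (fun A B => A ∩ B) α β).filter (fun C => C ≠ ∅)

/-- `M(α)`: the number of members of `α` of positive norm. -/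
noncomputable def Mcard {X K : Type*} [NormedField K] (R : Set (Set X)) (μ : Set X → K)
    (α : Finset (Set X)) : ℕ :=
  (α.filter (fun A => 0 < setNorm R μ A)).card

/-- `H_μ(α) = (min {‖A‖_μ : A ∈ α, ‖A‖_μ > 0}) * log₂ M(α)` (and `0` if `M(α) = 0`,
since `sInf ∅ = 0` and `log₂ 0 = 0` in Mathlib). -/
noncomputable def Hent {X K : Type*} [NormedField K] (R : Set (Set X)) (μ : Set X → K)
    (α : Finset (Set X)) : ℝ :=
  sInf {r : ℝ | ∃ A ∈ α, 0 < setNorm R μ A ∧ r = setNorm R μ A} *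
    Real.logb 2 (Mcard R μ α)

/-- `joinSeq T α n = α ∨ T⁻¹α ∨ ⋯ ∨ T^{-n}α`. -/
noncomputable def joinSeq {X : Type*} (T : X → X) (α : Finset (Set X)) : ℕ → Finset (Set X)
  | 0 => α
  | n + 1 => pJoin (joinSeq T α n) (α.image (fun A => T^[n + 1] ⁻¹' A))

/-- `h_μ(T,α) = lim_{n→∞} H_μ(α ∨ T⁻¹α ∨ ⋯ ∨ T^{-(n-1)}α)/n`. -/
noncomputable def hMeasPart {X K : Type*} [NormedField K] (R : Set (Set X)) (μ : Set X → K)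
    (T : X → X) (α : Finset (Set X)) : ℝ :=
  Filter.limUnder Filter.atTop (fun n : ℕ => Hent R μ (joinSeq T α n) / (n + 1))

/-- `h_μ(T) = sup_α h_μ(T,α)` over finite partitions `α` of `X` relative to `R`. -/
noncomputable def hMeas {X K : Type*} [NormedField K] (R : Set (Set X)) (μ : Set X → K)
    (T : X → X) : ℝ :=
  sSup {r : ℝ | ∃ α : Finset (Set X), IsFinPartition R α ∧ r = hMeasPart R μ T α}

/-- The partition `α(𝒰)` associated to a finite cover `𝒰`: nonempty sets of the form
`A₁ ∩ ⋯ ∩ A_k` where each `Aᵢ` is `Uᵢ` or `X ∖ Uᵢ`. -/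
noncomputable def coverPart {X : Type*} (𝒰 : Finset (Set X)) : Finset (Set X) :=
  ((𝒰.powerset).image fun S => (⋂ U ∈ S, U) ∩ ⋂ U ∈ 𝒰 \ S, (Set.univ \ U)).filter
    (fun C => C ≠ ∅)

/-- The join `𝒰 ∨ 𝒲` of two covers. -/
noncomputable def cJoin {X : Type*} (𝒰 𝒲 : Finset (Set X)) : Finset (Set X) :=
  Finset.image₂ (fun U W => U ∩ W) 𝒰 𝒲

/-- `N(𝒰)`: the least cardinality of a subcover of `𝒰`. -/
noncomputable def coverN {X : Type*} (𝒰 : Finset (Set X)) : ℕ :=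
  sInf {n : ℕ | ∃ 𝒱 : Finset (Set X), 𝒱 ⊆ 𝒰 ∧ ⋃₀ (𝒱 : Set (Set X)) = Set.univ ∧ 𝒱.card = n}

/-- `H_top(𝒰) = log₂ N(𝒰)`. -/
noncomputable def Htop {X : Type*} (𝒰 : Finset (Set X)) : ℝ :=
  Real.logb 2 (coverN 𝒰)

/-- `cJoinSeq T 𝒰 n = 𝒰 ∨ T⁻¹𝒰 ∨ ⋯ ∨ T^{-n}𝒰`. -/
noncomputable def cJoinSeq {X : Type*} (T : X → X) (𝒰 : Finset (Set X)) : ℕ → Finset (Set X)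
  | 0 => 𝒰
  | n + 1 => cJoin (cJoinSeq T 𝒰 n) (𝒰.image (fun U => T^[n + 1] ⁻¹' U))

/-- `h_top(T,𝒰) = lim_{n→∞} H_top(𝒰 ∨ T⁻¹𝒰 ∨ ⋯ ∨ T^{-(n-1)}𝒰)/n`. -/
noncomputable def hTopCov {X : Type*} (T : X → X) (𝒰 : Finset (Set X)) : ℝ :=
  Filter.limUnder Filter.atTop (fun n : ℕ => Htop (cJoinSeq T 𝒰 n) / (n + 1))

/-- `h_top(T) = sup_𝒰 h_top(T,𝒰)` over finite open covers `𝒰` of `X` for the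
topology `t`. -/
noncomputable def hTop {X : Type*} (t : TopologicalSpace X) (T : X → X) : ℝ :=
  sSup {r : ℝ | ∃ 𝒰 : Finset (Set X), (∀ U ∈ 𝒰, t.IsOpen U) ∧
    ⋃₀ (𝒰 : Set (Set X)) = Set.univ ∧ r = hTopCov T 𝒰}

/-!
A cell of `α ∨ β` of positive norm lies in cells of `α` and of `β` of positive norm, so
`M(α ∨ β) ≤ M(α) M(β)`. Conversely, a cell `A ∈ α` of positive norm contains some `B ∈ R` with
`μ B ≠ 0`; by finite additivity over the cells `B'` of `β`, some `μ (B ∩ B')` is nonzero, so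
`A ∩ B'` is a cell of `α ∨ β` of positive norm inside `A`. Hence the least positive norm of
`α ∨ β` is at most those of `α` and of `β`, and the claim follows from
`log₂ (M(α) M(β)) = log₂ M(α) + log₂ M(β)`.
-/

open Set

section

variable {X K : Type*} [NormedField K] {R : Set (Set X)} {μ : Set X → K}

lemma IsCoveringRing.isSetRing (hR : IsCoveringRing R) {A : Set X} (hA : A ∈ R) :
    MeasureTheory.IsSetRing R where
  empty_mem := by simpa using (hR.2 A hA A hA).2.2
  union_mem _ _ hs ht := (hR.2 _ hs _ ht).2.1
  sdiff_mem _ _ hs ht := (hR.2 _ hs _ ht).2.2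

namespace IsKMeasure

lemma map_empty (hμ : IsKMeasure R μ) (h : ∅ ∈ R) : μ ∅ = 0 := by
  simpa using hμ.additive ∅ h ∅ h (disjoint_empty ∅)

lemma nonempty_of_map_ne_zero (hμ : IsKMeasure R μ) (h : ∅ ∈ R) {A : Set X} (hA : μ A ≠ 0) :
    A.Nonempty := by
  rw [nonempty_iff_ne_empty]
  rintro rfl
  exact hA (hμ.map_empty h)

lemma map_biUnion (hμ : IsKMeasure R μ) (hR : MeasureTheory.IsSetRing R) {ι : Type*}
    {s : ι → Set X} {S : Finset ι} (hs : ∀ i ∈ S, s i ∈ R)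
    (hS : (S : Set ι).PairwiseDisjoint s) :
    μ (⋃ i ∈ S, s i) = ∑ i ∈ S, μ (s i) := by
  classical
  induction S using Finset.induction with
  | empty => simpa using hμ.map_empty hR.empty_mem
  | insert i S hiS ih =>
    simp only [Finset.mem_insert, forall_eq_or_imp] at hs
    simp only [Finset.coe_insert, pairwiseDisjoint_insert] at hS
    rw [Finset.sum_insert hiS, Finset.set_biUnion_insert, ← ih hs.2 hS.1]
    refine hμ.additive _ hs.1 _ (hR.biUnion_mem S hs.2) ?_
    rw [disjoint_iUnion₂_right]
    exact fun j hj ↦ hS.2 j hj (ne_of_mem_of_not_mem hj hiS).symm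

lemma norm_le_setNorm (hμ : IsKMeasure R μ) {A B : Set X} (hA : A ∈ R) (hB : B ∈ R)
    (hBA : B ⊆ A) : ‖μ B‖ ≤ setNorm R μ A := by
  obtain ⟨M, hM⟩ := hμ.bounded A hA
  refine le_csSup ⟨M, ?_⟩ ⟨B, hB, hBA, rfl⟩
  rintro _ ⟨B', hB', hB'A, rfl⟩
  exact hM B' hB' hB'A

end IsKMeasure

lemma setNorm_nonneg (A : Set X) : 0 ≤ setNorm R μ A :=
  Real.sSup_nonneg (by rintro _ ⟨B, -, -, rfl⟩; exact norm_nonneg _)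

lemma IsKMeasure.setNorm_mono (hμ : IsKMeasure R μ) {A A' : Set X} (hA : A ∈ R)
    (h : A' ⊆ A) : setNorm R μ A' ≤ setNorm R μ A :=
  Real.sSup_le (by rintro _ ⟨B, hB, hBA', rfl⟩; exact hμ.norm_le_setNorm hA hB (hBA'.trans h))
    (setNorm_nonneg A)

lemma exists_subset_map_ne_zero_of_setNorm_pos {A : Set X} (h : 0 < setNorm R μ A) :
    ∃ B ∈ R, B ⊆ A ∧ μ B ≠ 0 := by
  by_contra! hzero
  refine h.not_ge (Real.sSup_nonpos ?_)
  rintro _ ⟨B, hB, hBA, rfl⟩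
  simp [hzero B hB hBA]

lemma IsFinPartition.biUnion_inter {δ : Finset (Set X)} (hδ : IsFinPartition R δ)
    (B : Set X) : ⋃ B' ∈ δ, B ∩ B' = B := by
  simp only [← inter_iUnion₂, ← Finset.mem_coe, ← sUnion_eq_biUnion, hδ.2.2.2, inter_univ]

lemma IsFinPartition.exists_map_inter_ne_zero {δ : Finset (Set X)} (hδ : IsFinPartition R δ)
    (hR : IsCoveringRing R) (hμ : IsKMeasure R μ) {B : Set X} (hB : B ∈ R) (h : μ B ≠ 0) :
    ∃ B' ∈ δ, μ (B ∩ B') ≠ 0 := by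
  have hRing := hR.isSetRing hB
  refine Finset.exists_ne_zero_of_sum_ne_zero ?_
  rwa [← hμ.map_biUnion hRing (fun B' hB' ↦ hRing.inter_mem hB (hδ.1 B' hB')), hδ.biUnion_inter]
  exact fun B₁ h₁ B₂ h₂ hne ↦
    (hδ.2.2.1 B₁ h₁ B₂ h₂ hne).mono inter_subset_right inter_subset_right

lemma mem_pJoin {α β : Finset (Set X)} {C : Set X} :
    C ∈ pJoin α β ↔ (∃ A ∈ α, ∃ B ∈ β, A ∩ B = C) ∧ C ≠ ∅ := by
  simp [pJoin]

lemma pJoin_comm (α β : Finset (Set X)) : pJoin α β = pJoin β α := by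
  rw [pJoin, Finset.image₂_swap]
  simp_rw [inter_comm]
  rfl

lemma exists_mem_pJoin_subset_setNorm_pos (hR : IsCoveringRing R) (hμ : IsKMeasure R μ)
    {α β : Finset (Set X)} (hβ : IsFinPartition R β) {A : Set X} (hA : A ∈ α) (hAR : A ∈ R)
    (hpos : 0 < setNorm R μ A) : ∃ C ∈ pJoin α β, C ⊆ A ∧ 0 < setNorm R μ C := by
  obtain ⟨B, hB, hBA, hμB⟩ := exists_subset_map_ne_zero_of_setNorm_pos hpos
  obtain ⟨B', hB', hμBB'⟩ := hβ.exists_map_inter_ne_zero hR hμ hB hμB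
  have hRing := hR.isSetRing hB
  have hsub : B ∩ B' ⊆ A ∩ B' := inter_subset_inter_left B' hBA
  refine ⟨A ∩ B', mem_pJoin.2 ⟨⟨A, hA, B', hB', rfl⟩, ?_⟩, inter_subset_left, ?_⟩
  · exact ((hμ.nonempty_of_map_ne_zero hRing.empty_mem hμBB').mono hsub).ne_empty
  · exact (norm_pos_iff.2 hμBB').trans_le <| hμ.norm_le_setNorm
      (hRing.inter_mem hAR (hβ.1 B' hB')) (hRing.inter_mem hB (hβ.1 B' hB')) hsub

lemma Mcard_pJoin_le (hμ : IsKMeasure R μ) {α β : Finset (Set X)} (hα : ∀ A ∈ α, A ∈ R)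
    (hβ : ∀ B ∈ β, B ∈ R) : Mcard R μ (pJoin α β) ≤ Mcard R μ α * Mcard R μ β := by
  refine (Finset.card_le_card ?_).trans (Finset.card_image₂_le (· ∩ ·) _ _)
  intro C hC
  rw [Finset.mem_filter, mem_pJoin] at hC
  obtain ⟨⟨⟨A, hA, B, hB, rfl⟩, -⟩, hpos⟩ := hC
  exact Finset.mem_image₂_of_mem
    (Finset.mem_filter.2 ⟨hA, hpos.trans_le (hμ.setNorm_mono (hα A hA) inter_subset_left)⟩)
    (Finset.mem_filter.2 ⟨hB, hpos.trans_le (hμ.setNorm_mono (hβ B hB) inter_subset_right)⟩)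

noncomputable def minPosNorm (R : Set (Set X)) (μ : Set X → K) (α : Finset (Set X)) : ℝ :=
  sInf {r : ℝ | ∃ A ∈ α, 0 < setNorm R μ A ∧ r = setNorm R μ A}

lemma Hent_eq (α : Finset (Set X)) :
    Hent R μ α = minPosNorm R μ α * Real.logb 2 (Mcard R μ α) := rfl

lemma minPosNorm_nonneg (α : Finset (Set X)) : 0 ≤ minPosNorm R μ α :=
  Real.sInf_nonneg (by rintro _ ⟨A, -, hpos, rfl⟩; exact hpos.le)

lemma minPosNorm_le {α : Finset (Set X)} {A : Set X} (hA : A ∈ α) (hpos : 0 < setNorm R μ A) :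
    minPosNorm R μ α ≤ setNorm R μ A :=
  csInf_le ⟨0, by rintro _ ⟨A, -, hpos, rfl⟩; exact hpos.le⟩ ⟨A, hA, hpos, rfl⟩

lemma minPosNorm_eq_zero_of_Mcard_eq_zero {α : Finset (Set X)} (h : Mcard R μ α = 0) :
    minPosNorm R μ α = 0 := by
  rw [Mcard, Finset.card_eq_zero, Finset.filter_eq_empty_iff] at h
  rw [minPosNorm]
  convert Real.sInf_empty
  refine eq_empty_of_forall_notMem ?_
  rintro _ ⟨A, hA, hpos, -⟩
  exact h hA hpos

lemma minPosNorm_pJoin_le_left (hR : IsCoveringRing R) (hμ : IsKMeasure R μ)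
    {α β : Finset (Set X)} (hα : ∀ A ∈ α, A ∈ R) (hβ : IsFinPartition R β) :
    minPosNorm R μ (pJoin α β) ≤ minPosNorm R μ α := by
  rcases Nat.eq_zero_or_pos (Mcard R μ α) with h | h
  · have hjoin : Mcard R μ (pJoin α β) = 0 := by
      simpa [h] using Mcard_pJoin_le hμ hα hβ.1
    rw [minPosNorm_eq_zero_of_Mcard_eq_zero h, minPosNorm_eq_zero_of_Mcard_eq_zero hjoin]
  obtain ⟨A₀, hA₀⟩ := Finset.card_pos.1 h
  rw [Finset.mem_filter] at hA₀
  refine le_csInf ⟨_, A₀, hA₀.1, hA₀.2, rfl⟩ ?_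
  rintro _ ⟨A, hA, hpos, rfl⟩
  obtain ⟨C, hC, hCA, hCpos⟩ :=
    exists_mem_pJoin_subset_setNorm_pos hR hμ hβ hA (hα A hA) hpos
  exact (minPosNorm_le hC hCpos).trans (hμ.setNorm_mono (hα A hA) hCA)

lemma minPosNorm_pJoin_le_right (hR : IsCoveringRing R) (hμ : IsKMeasure R μ)
    {α β : Finset (Set X)} (hα : IsFinPartition R α) (hβ : ∀ B ∈ β, B ∈ R) :
    minPosNorm R μ (pJoin α β) ≤ minPosNorm R μ β :=
  pJoin_comm α β ▸ minPosNorm_pJoin_le_left hR hμ hβ hα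

end

lemma Real.logb_natCast_nonneg {b : ℝ} (hb : 1 < b) (n : ℕ) : 0 ≤ Real.logb b n :=
  div_nonneg (Real.log_natCast_nonneg n) (Real.log_nonneg hb.le)

lemma Real.logb_natCast_le_add_of_le_mul {b : ℝ} (hb : 1 < b) {m n k : ℕ} (h : m ≤ n * k) :
    Real.logb b m ≤ Real.logb b n + Real.logb b k := by
  rcases Nat.eq_zero_or_pos m with rfl | hm
  · simpa using add_nonneg (Real.logb_natCast_nonneg hb n) (Real.logb_natCast_nonneg hb k)
  have hn : (n : ℝ) ≠ 0 := by norm_cast; rintro rfl; omega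
  have hk : (k : ℝ) ≠ 0 := by norm_cast; rintro rfl; omega
  rw [← Real.logb_mul hn hk]
  exact Real.logb_le_logb_of_le hb (by exact_mod_cast hm) (by exact_mod_cast h)

theorem stmt13_general {X K : Type*} [NontriviallyNormedField K]
    (R : Set (Set X)) (hR : IsCoveringRing R) (μ : Set X → K) (hμ : IsKMeasure R μ)
    (α β : Finset (Set X)) (hα : IsFinPartition R α) (hβ : IsFinPartition R β) :
    Hent R μ (pJoin α β) ≤ Hent R μ α + Hent R μ β := by
  have hlog := Real.logb_natCast_le_add_of_le_mul one_lt_two (Mcard_pJoin_le hμ hα.1 hβ.1)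
  rw [Hent_eq, Hent_eq, Hent_eq]
  calc minPosNorm R μ (pJoin α β) * Real.logb 2 (Mcard R μ (pJoin α β))
      ≤ minPosNorm R μ (pJoin α β) * (Real.logb 2 (Mcard R μ α) + Real.logb 2 (Mcard R μ β)) :=
        mul_le_mul_of_nonneg_left hlog (minPosNorm_nonneg _)
    _ = minPosNorm R μ (pJoin α β) * Real.logb 2 (Mcard R μ α) +
          minPosNorm R μ (pJoin α β) * Real.logb 2 (Mcard R μ β) := mul_add _ _ _
    _ ≤ minPosNorm R μ α * Real.logb 2 (Mcard R μ α) +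
          minPosNorm R μ β * Real.logb 2 (Mcard R μ β) := by
        gcongr
        · exact Real.logb_natCast_nonneg one_lt_two _
        · exact minPosNorm_pJoin_le_left hR hμ hα.1 hβ
        · exact Real.logb_natCast_nonneg one_lt_two _
        · exact minPosNorm_pJoin_le_right hR hμ hα hβ.1

/-- For finite partitions `α`, `β` of `X` relative to `R`, the measure
entropy is subadditive: `H_μ(α ∨ β) ≤ H_μ(α) + H_μ(β)`. -/
theorem stmt13 {X K : Type*} [NontriviallyNormedField K] [CompleteSpace K]
    (hna : IsNonarchimedean (norm : K → ℝ))
    (R : Set (Set X)) (hR : IsCoveringRing R) (μ : Set X → K) (hμ : IsKMeasure R μ)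
    (α β : Finset (Set X)) (hα : IsFinPartition R α) (hβ : IsFinPartition R β) :
    Hent R μ (pJoin α β) ≤ Hent R μ α + Hent R μ β :=
  stmt13_general R hR μ hμ α β hα hβ
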